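/- For any freely reduced words u, v, w not containing a_i^{±1}, |uv|_i^cr − |w|_i^cr − 1 ≤ |uwv|_i^cr ≤ |uv|_i^cr + |w|_i^cr + 1. -/

import Mathlib

namespace ESPaper

/-- A letter of the free group `F_n` over the standard basis: a generator index and a sign
    (`true` = the generator, `false` = its inverse). -/
abbrev Ltr (n : ℕ) := Fin n × Bool

/-- A word over the standard basis and its inverses. -/
abbrev Wrd (n : ℕ) := List (Ltr n)

/-- The inverse of a letter. -/
def linv {n : ℕ} (c : Ltr n) : Ltr n := (c.1, !c.2)

/-- The (formal) inverse of a word. -/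
def winv {n : ℕ} (w : Wrd n) : Wrd n := w.reverse.map linv

/-- `w` is freely reduced: no two consecutive letters are inverse to each other. -/
def Reduced {n : ℕ} (w : Wrd n) : Prop := List.Chain' (fun a b => b ≠ linv a) w

/-- `w` is cyclically reduced. -/
def CyclicallyReduced {n : ℕ} (w : Wrd n) : Prop := Reduced (w ++ w)

/-- `w` contains no occurrence of `a_i^{±1}`. -/
def Avoids {n : ℕ} (i : Fin n) (w : Wrd n) : Prop := ∀ c ∈ w, c.1 ≠ i

/-- `w` is a positive word (no inverse letters). -/
def Positive {n : ℕ} (w : Wrd n) : Prop := ∀ c ∈ w, c.2 = true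

/-- Vertices of the Whitehead graph over `a ∖ {a_i}`: all letters whose index is not `i`. -/
def WVert (n : ℕ) (i : Fin n) := {c : Ltr n // c.1 ≠ i}

/-- The Whitehead graph `Γ_{a∖{a_i}}(w)`: for each pair of consecutive letters `bc` of `w`,
    an edge from `b` to `c⁻¹`. -/
def WGraph {n : ℕ} (i : Fin n) (w : Wrd n) : SimpleGraph (WVert n i) where
  Adj x y := x ≠ y ∧ ∃ p ∈ w.zip w.tail,
    (x.1 = p.1 ∧ y.1 = linv p.2) ∨ (y.1 = p.1 ∧ x.1 = linv p.2)
  symm := by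
    constructor
    rintro x y ⟨hne, p, hp, h⟩
    exact ⟨hne.symm, p, hp, h.symm⟩
  loopless := ⟨fun x h => h.1 rfl⟩

/-- A graph has a cut vertex `v` if it is the union of two subgraphs, each with a vertex
    other than `v`, which intersect exactly in `v`.  (A disconnected graph on at least three
    vertices automatically has a cut vertex in this sense.) -/
def HasCutVertex {V : Type*} (G : SimpleGraph V) : Prop :=
  ∃ (v : V) (H₁ H₂ : G.Subgraph),
    H₁ ⊔ H₂ = ⊤ ∧ H₁.verts ∩ H₂.verts = {v} ∧ H₁.verts ≠ {v} ∧ H₂.verts ≠ {v}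

/-- The simple `i`-length of a word `w` (containing no `a_i^{±1}`): the greatest `t` such
    that `w = w_1 ⋯ w_t` where no Whitehead graph `Γ_{a∖{a_i}}(w_j)` has a cut vertex
    (`0` if there is no such decomposition, in particular if `Γ_{a∖{a_i}}(w)` has a cut
    vertex). -/
noncomputable def simpleLen {n : ℕ} (i : Fin n) (w : Wrd n) : ℕ :=
  sSup {t | ∃ ps : List (Wrd n), ps.length = t ∧ ps.flatten = w ∧
      ∀ p ∈ ps, p ≠ [] ∧ ¬ HasCutVertex (WGraph i p)}

/-- The conjugate reduced `i`-length of `w`: the minimum over all decompositions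
    `w =_r v_1^{u_1} ⋯ v_l^{u_l}` (equality in the free group, `v^u = u⁻¹ v u`) of
    `(l - 1) + Σ_j |v_j|_i^simple`. -/
noncomputable def crLen {n : ℕ} (i : Fin n) (w : Wrd n) : ℕ :=
  sInf {k | ∃ vs us : List (Wrd n), vs ≠ [] ∧ us.length = vs.length ∧
      (∀ v ∈ vs, Reduced v ∧ Avoids i v) ∧
      FreeGroup.mk w =
        ((vs.zip us).map fun p => (FreeGroup.mk p.2)⁻¹ * FreeGroup.mk p.1 * FreeGroup.mk p.2).prod ∧
      k = (vs.length - 1) + (vs.map (simpleLen i)).sum}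

/-- One step of cyclic reduction: cancel the first against the last letter if possible. -/
def stripOnce {n : ℕ} : Wrd n → Wrd n
  | [] => []
  | a :: rest => if rest.getLast? = some (linv a) then rest.dropLast else a :: rest

/-- Cyclic reduction of a (reduced) word. -/
def cyclicReduce {n : ℕ} (w : Wrd n) : Wrd n := stripOnce^[w.length] w

/-- `u` cyclically precedes position `p` in the cyclic word `v`. -/
def CycPrec {n : ℕ} (v : Wrd n) (p : ℕ) (u : Wrd n) : Prop :=
  u <:+ (v ++ v).take (v.length + p)

/-- `u` cyclically follows position `p` in the cyclic word `v`. -/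
def CycFoll {n : ℕ} (v : Wrd n) (p : ℕ) (u : Wrd n) : Prop :=
  u <+: (v ++ v).drop (p + 1)

/-- `u` cyclically precedes every occurrence of `a_i` (and `u⁻¹` cyclically follows every
    occurrence of `a_i⁻¹`) in the cyclic reductions of the words of `Y`. -/
def IsPrecWord {n : ℕ} (i : Fin n) (Y : List (Wrd n)) (u : Wrd n) : Prop :=
  Avoids i u ∧ ∀ y ∈ Y, ∀ p < (cyclicReduce y).length,
    ((cyclicReduce y)[p]? = some (i, true) → CycPrec (cyclicReduce y) p u) ∧
    ((cyclicReduce y)[p]? = some (i, false) → CycFoll (cyclicReduce y) p (winv u))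

open scoped Classical in
/-- The word `w_L(Y)`: a longest word cyclically preceding every occurrence of `a_i`
    in the cyclic reductions of the words of `Y` (trivial if there is no longest one). -/
noncomputable def wL {n : ℕ} (i : Fin n) (Y : List (Wrd n)) : Wrd n :=
  if h : ∃ u, IsPrecWord i Y u ∧ ∀ u', IsPrecWord i Y u' → u'.length ≤ u.length
  then h.choose else []

/-- The set of cyclic positions of `v` occupied by the occurrences of a preceding word of
    length `len` around the occurrences of `a_i^{±1}`. -/
def LOcc {n : ℕ} (i : Fin n) (len : ℕ) (v : Wrd n) : Set ℕ :=
  {t | ∃ p k, p < v.length ∧ k < len ∧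
    ((v[p]? = some (i, true) ∧ t = (p + v.length - 1 - k) % v.length) ∨
     (v[p]? = some (i, false) ∧ t = (p + 1 + k) % v.length))}

/-- The set of cyclic positions of `v` occupied by the occurrences of a following word of
    length `len` around the occurrences of `a_i^{±1}`. -/
def ROcc {n : ℕ} (i : Fin n) (len : ℕ) (v : Wrd n) : Set ℕ :=
  {t | ∃ p k, p < v.length ∧ k < len ∧
    ((v[p]? = some (i, true) ∧ t = (p + 1 + k) % v.length) ∨
     (v[p]? = some (i, false) ∧ t = (p + v.length - 1 - k) % v.length))}

/-- `u` cyclically follows every occurrence of `a_i` (and `u⁻¹` precedes every `a_i⁻¹`)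
    in the cyclic reductions of the words of `Y`, with no occurrence of `u` intersecting an
    occurrence of `w_L(Y)`. -/
def IsFolWord {n : ℕ} (i : Fin n) (Y : List (Wrd n)) (u : Wrd n) : Prop :=
  Avoids i u ∧ (∀ y ∈ Y, ∀ p < (cyclicReduce y).length,
    ((cyclicReduce y)[p]? = some (i, true) → CycFoll (cyclicReduce y) p u) ∧
    ((cyclicReduce y)[p]? = some (i, false) → CycPrec (cyclicReduce y) p (winv u))) ∧
  ∀ y ∈ Y, Disjoint (LOcc i (wL i Y).length (cyclicReduce y)) (ROcc i u.length (cyclicReduce y))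

open scoped Classical in
/-- The word `w_R(Y)`. -/
noncomputable def wR {n : ℕ} (i : Fin n) (Y : List (Wrd n)) : Wrd n :=
  if h : ∃ u, IsFolWord i Y u ∧ ∀ u', IsFolWord i Y u' → u'.length ≤ u.length
  then h.choose else []

/-- The auxiliary automorphism `α'` sending `a_i` to `w_L⁻¹ a_i w_R⁻¹`. -/
noncomputable def alphaP {n : ℕ} (i : Fin n) (Y : List (Wrd n)) :
    FreeGroup (Fin n) →* FreeGroup (Fin n) :=
  FreeGroup.lift fun j => if j = i then
    (FreeGroup.mk (wL i Y))⁻¹ * FreeGroup.of i * (FreeGroup.mk (wR i Y))⁻¹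
  else FreeGroup.of j

/-- The cyclic reduction of `α'(y)` written as a reduced word. -/
noncomputable def apWord {n : ℕ} (i : Fin n) (Y : List (Wrd n)) (y : Wrd n) : Wrd n :=
  cyclicReduce (FreeGroup.toWord (alphaP i Y (FreeGroup.mk y)))

/-- In `α' Y`, every maximal power of `a_i` either occurs by itself as an element, or is
    cyclically conjugated by `u`. -/
def IsConjWord {n : ℕ} (i : Fin n) (Y : List (Wrd n)) (u : Wrd n) : Prop :=
  Avoids i u ∧ ∀ y ∈ Y,
    (∀ c ∈ apWord i Y y, c.1 = i) ∨
    ∀ p < (apWord i Y y).length,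
      (apWord i Y y)[p]?.map Prod.fst = some i →
        (((apWord i Y y)[(p + (apWord i Y y).length - 1) % (apWord i Y y).length]?.map
            Prod.fst ≠ some i → CycPrec (apWord i Y y) p (winv u)) ∧
         ((apWord i Y y)[(p + 1) % (apWord i Y y).length]?.map Prod.fst ≠ some i →
            CycFoll (apWord i Y y) p u))

open scoped Classical in
/-- The word `w_C(Y)` (trivial when every maximal power of `a_i` occurs by itself,
    since then there is no longest conjugating word). -/
noncomputable def wC {n : ℕ} (i : Fin n) (Y : List (Wrd n)) : Wrd n :=
  if h : ∃ u, IsConjWord i Y u ∧ ∀ u', IsConjWord i Y u' → u'.length ≤ u.length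
  then h.choose else []

/-- The automorphism `α_Y` sending `a_i` to `w_L⁻¹ w_C a_i w_C⁻¹ w_R⁻¹`. -/
noncomputable def alphaFG {n : ℕ} (i : Fin n) (Y : List (Wrd n)) :
    FreeGroup (Fin n) →* FreeGroup (Fin n) :=
  FreeGroup.lift fun j => if j = i then
    (FreeGroup.mk (wL i Y))⁻¹ * FreeGroup.mk (wC i Y) * FreeGroup.of i *
      (FreeGroup.mk (wC i Y))⁻¹ * (FreeGroup.mk (wR i Y))⁻¹
  else FreeGroup.of j

/-- `u` is an `i`-chunk of `g`: a maximal cyclic subword of the cyclic reduction of `g`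
    containing no `a_i^{±1}`. -/
def IsIChunk {n : ℕ} (i : Fin n) (g : FreeGroup (Fin n)) (u : Wrd n) : Prop :=
  Avoids i u ∧
    ((∃ p < (cyclicReduce g.toWord).length,
        (cyclicReduce g.toWord)[p]?.map Prod.fst = some i ∧
        u <+: (cyclicReduce g.toWord ++ cyclicReduce g.toWord).drop (p + 1) ∧
        ((cyclicReduce g.toWord ++ cyclicReduce g.toWord).drop (p + 1 + u.length)).head?.map
          Prod.fst = some i) ∨
     (Avoids i (cyclicReduce g.toWord) ∧ ∃ p ≤ (cyclicReduce g.toWord).length,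
        u = (cyclicReduce g.toWord).drop p ++ (cyclicReduce g.toWord).take p))

/-- `k(Y)`: the maximal conjugate reduced `i`-length of an `i`-chunk of `α_Y y`, `y ∈ Y`. -/
noncomputable def kLen {n : ℕ} (i : Fin n) (Y : List (Wrd n)) : ℕ :=
  sSup {c | ∃ y ∈ Y, ∃ u, IsIChunk i (alphaFG i Y (FreeGroup.mk y)) u ∧ c = crLen i u}

/-- The full `i`-length `|Y|_i = k(Y) + |w_R(Y) w_L(Y)|_i^cr` of a set of reduced words. -/
noncomputable def fullLen {n : ℕ} (i : Fin n) (Y : List (Wrd n)) : ℕ :=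
  kLen i Y + crLen i (wR i Y ++ wL i Y)

/-- `x` is an (ordered) basis of the free group: it freely generates, i.e. the induced
    endomorphism of the free group is bijective. -/
def IsBasis {n : ℕ} (x : Fin n → FreeGroup (Fin n)) : Prop :=
  Function.Bijective (FreeGroup.lift x)

/-- A basis of `F_n` given by reduced words over the standard basis. -/
def IsWordBasis {n : ℕ} (x : Fin n → Wrd n) : Prop :=
  (∀ j, Reduced (x j)) ∧ IsBasis fun j => FreeGroup.mk (x j)

/-- `(A, B)` is a free factorization of `G` into two nontrivial free factors. -/
def IsFacPair {G : Type*} [Group G] (A B : Subgroup G) : Prop :=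
  A ≠ ⊥ ∧ B ≠ ⊥ ∧ Function.Bijective (Monoid.Coprod.lift A.subtype B.subtype)

/-- `(P, Q, R)` is a free factorization of `G` into three nontrivial free factors. -/
def IsFac3 {G : Type*} [Group G] (P Q R : Subgroup G) : Prop :=
  P ≠ ⊥ ∧ Q ≠ ⊥ ∧ R ≠ ⊥ ∧
    Function.Bijective (Monoid.CoprodI.lift fun j : Fin 3 => (![P, Q, R] j).subtype)

/-- The conjugate of a subgroup. -/
def conjSub {G : Type*} [Group G] (g : G) (H : Subgroup G) : Subgroup G :=
  H.map (MulAut.conj g).toMonoidHom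

/-- Two (ordered) pairs of subgroups determine the same vertex: they agree up to
    conjugation and swapping the factors. -/
def FacRel {G : Type*} [Group G] (p q : Subgroup G × Subgroup G) : Prop :=
  ∃ g : G, (q.1 = conjSub g p.1 ∧ q.2 = conjSub g p.2) ∨
           (q.1 = conjSub g p.2 ∧ q.2 = conjSub g p.1)

/-- Vertices of the edge splitting graph: pairs of subgroups up to conjugation and swap. -/
abbrev ESV (n : ℕ) := Quot (@FacRel (FreeGroup (Fin n)) _)

/-- The vertex of the edge splitting graph represented by the pair `(A, B)`. -/
def esv {n : ℕ} (A B : Subgroup (FreeGroup (Fin n))) : ESV n := Quot.mk _ (A, B)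

/-- The factorization `p` is refined by the factorization `q` via a common refinement
    `P * Q * R` into three nontrivial free factors: `p = (P*Q, R)` and `q = (P, Q*R)`. -/
def Refines {G : Type*} [Group G] (p q : Subgroup G × Subgroup G) : Prop :=
  ∃ P Q R : Subgroup G, IsFac3 P Q R ∧ p.1 = P ⊔ Q ∧ p.2 = R ∧ q.1 = P ∧ q.2 = Q ⊔ R

/-- The edge splitting graph `ES(n)`: two distinct vertices are adjacent if they admit
    representatives with a common refinement into three nontrivial free factors. -/
def ESGraph (n : ℕ) : SimpleGraph (ESV n) where
  Adj X Y := X ≠ Y ∧ ∃ p q, Quot.mk _ p = X ∧ Quot.mk _ q = Y ∧ (Refines p q ∨ Refines q p)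
  symm := by
    constructor
    rintro X Y ⟨hne, p, q, hp, hq, h⟩
    exact ⟨hne.symm, q, p, hq, hp, h.symm⟩
  loopless := ⟨fun X h => h.1 rfl⟩

/-- Nested families of canceling pairs:  `Fam w gs f` holds iff `w` carries a nested family
    `F` of `f` canceling pairs whose family of (possibly empty) maximal subwords disjoint
    from the pairs is `gs`. -/
inductive Fam {n : ℕ} : Wrd n → List (Wrd n) → ℕ → Prop
  | gap (g : Wrd n) : Fam g [g] 0
  | cons (g u w rest : Wrd n) (gs₁ gs₂ : List (Wrd n)) (f₁ f₂ : ℕ) :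
      u ≠ [] → Fam w gs₁ f₁ → Fam rest gs₂ f₂ →
      Fam (g ++ u ++ w ++ winv u ++ rest) (g :: (gs₁ ++ gs₂)) (f₁ + f₂ + 1)

/-!
Write `c(g)` for the least cost of a decomposition of `g ∈ F_n` into conjugates, so that
`|w|_i^cr = c(w)`. Concatenating decompositions gives `c(gh) ≤ c(g) + c(h) + 1`; conjugating
every factor, resp. inverting and reversing the list of factors (inversion preserves Whitehead
graphs, hence simple lengths), shows that `c` is invariant under conjugation and inversion.
Now `uwv = (u w u⁻¹)(uv)` and `uv = (uwv)(v⁻¹ w⁻¹ v)`.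
-/

end ESPaper

namespace List

theorem mem_zip_tail_iff_infix {α : Type*} {l : List α} {a b : α} :
    (a, b) ∈ l.zip l.tail ↔ [a, b] <:+: l := by
  induction l with
  | nil => simp
  | cons x l ih =>
    cases l with
    | nil => simp [List.infix_cons_iff]
    | cons y l =>
      simp only [List.tail_cons] at ih
      simp [List.zip_cons_cons, List.infix_cons_iff (l₂ := y :: l), ← ih]

theorem zip_reverse_reverse {α β : Type*} {l₁ : List α} {l₂ : List β}
    (h : l₁.length = l₂.length) : l₁.reverse.zip l₂.reverse = (l₁.zip l₂).reverse :=
  (List.reverse_zipWith h).symm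

end List

namespace ESPaper

section CrLen

variable {n : ℕ}

theorem linv_linv (c : Ltr n) : linv (linv c) = c := by
  simp [linv]

theorem winv_winv (w : Wrd n) : winv (winv w) = w := by
  simp [winv, List.map_reverse, Function.comp_def, linv_linv]

theorem winv_flatten (ps : List (Wrd n)) :
    winv ps.flatten = ((ps.map winv).reverse).flatten := by
  simp only [winv, List.reverse_flatten, List.map_flatten, List.map_reverse, List.map_map]
  rfl

theorem mk_winv (w : Wrd n) : FreeGroup.mk (winv w) = (FreeGroup.mk w)⁻¹ := by
  simp [FreeGroup.inv_mk, winv, FreeGroup.invRev, List.map_reverse]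
  rfl

theorem reduced_winv {w : Wrd n} (h : Reduced w) : Reduced (winv w) := by
  show List.IsChain _ ((w.reverse).map linv)
  rw [List.map_reverse, List.isChain_reverse, List.isChain_map]
  exact h.imp fun a b hab => by simpa [linv_linv] using hab.symm

theorem avoids_winv {i : Fin n} {w : Wrd n} (h : Avoids i w) : Avoids i (winv w) := by
  intro c hc
  obtain ⟨d, hd, rfl⟩ := List.mem_map.1 hc
  exact h d (List.mem_reverse.1 hd)

theorem wGraph_winv_adj {i : Fin n} {w : Wrd n} {x y : WVert n i}
    (h : (WGraph i w).Adj x y) : (WGraph i (winv w)).Adj x y := by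
  obtain ⟨hne, ⟨a, b⟩, hab, hxy⟩ := h
  refine ⟨hne, (linv b, linv a), ?_, by simpa [linv_linv, or_comm, and_comm] using hxy⟩
  rw [List.mem_zip_tail_iff_infix] at hab ⊢
  simpa [winv] using (hab.reverse.map linv)

theorem wGraph_winv (i : Fin n) (w : Wrd n) : WGraph i (winv w) = WGraph i w := by
  ext x y
  refine ⟨fun h => ?_, wGraph_winv_adj⟩
  simpa [winv_winv] using wGraph_winv_adj h

theorem simpleLen_winv (i : Fin n) (w : Wrd n) : simpleLen i (winv w) = simpleLen i w := by
  suffices h : ∀ w : Wrd n, {t | ∃ ps : List (Wrd n), ps.length = t ∧ ps.flatten = w ∧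
      ∀ p ∈ ps, p ≠ [] ∧ ¬ HasCutVertex (WGraph i p)} ⊆
      {t | ∃ ps : List (Wrd n), ps.length = t ∧ ps.flatten = winv w ∧
      ∀ p ∈ ps, p ≠ [] ∧ ¬ HasCutVertex (WGraph i p)} by
    unfold simpleLen
    congr 1
    exact (h w).antisymm' (by simpa [winv_winv] using h (winv w))
  rintro w _ ⟨ps, rfl, rfl, hps⟩
  refine ⟨(ps.map winv).reverse, by simp, (winv_flatten ps).symm, ?_⟩
  simp only [List.mem_reverse, List.mem_map, forall_exists_index, and_imp]
  rintro _ p hp rfl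
  refine ⟨fun h => (hps p hp).1 ?_, by simpa [wGraph_winv] using (hps p hp).2⟩
  simpa [winv_winv, winv] using congrArg winv h

theorem Avoids.append {i : Fin n} {x y : Wrd n} (hx : Avoids i x) (hy : Avoids i y) :
    Avoids i (x ++ y) :=
  List.forall_mem_append.2 ⟨hx, hy⟩

variable (i : Fin n)

def conjTerm (p : Wrd n × Wrd n) : FreeGroup (Fin n) :=
  (FreeGroup.mk p.2)⁻¹ * FreeGroup.mk p.1 * FreeGroup.mk p.2

def crCosts (g : FreeGroup (Fin n)) : Set ℕ :=
  {k | ∃ vs us : List (Wrd n), vs ≠ [] ∧ us.length = vs.length ∧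
      (∀ v ∈ vs, Reduced v ∧ Avoids i v) ∧
      g = ((vs.zip us).map conjTerm).prod ∧
      k = (vs.length - 1) + (vs.map (simpleLen i)).sum}

theorem crLen_eq_sInf_crCosts (w : Wrd n) : crLen i w = sInf (crCosts i (FreeGroup.mk w)) :=
  rfl

variable {i}

theorem add_add_one_mem_crCosts_mul {g h : FreeGroup (Fin n)} {k l : ℕ}
    (hk : k ∈ crCosts i g) (hl : l ∈ crCosts i h) : k + l + 1 ∈ crCosts i (g * h) := by
  obtain ⟨vs₁, us₁, hne₁, hlen₁, hred₁, rfl, rfl⟩ := hk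
  obtain ⟨vs₂, us₂, hne₂, hlen₂, hred₂, rfl, rfl⟩ := hl
  refine ⟨vs₁ ++ vs₂, us₁ ++ us₂, by simp [hne₁], by simp [hlen₁, hlen₂], ?_, ?_, ?_⟩
  · exact fun v hv => (List.mem_append.1 hv).elim (hred₁ v) (hred₂ v)
  · rw [List.zip_append hlen₁.symm, List.map_append, List.prod_append]
  · have h₁ := List.length_pos_iff.2 hne₁
    have h₂ := List.length_pos_iff.2 hne₂
    simp only [List.length_append, List.map_append, List.sum_append]
    omega

theorem simpleLen_mem_crCosts {v : Wrd n} (hred : Reduced v) (hav : Avoids i v) :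
    simpleLen i v ∈ crCosts i (FreeGroup.mk v) :=
  ⟨[v], [[]], by simp, rfl, by simpa using ⟨hred, hav⟩, by simp [conjTerm], by simp⟩

theorem crCosts_mk_nonempty {w : Wrd n} (h : Avoids i w) :
    (crCosts i (FreeGroup.mk w)).Nonempty := by
  induction w with
  | nil => exact ⟨_, simpleLen_mem_crCosts List.isChain_nil (by simp [Avoids])⟩
  | cons c w ih =>
    obtain ⟨k, hk⟩ := ih fun d hd => h d (List.mem_cons_of_mem c hd)
    have hc := simpleLen_mem_crCosts (i := i) (List.isChain_singleton c)
      fun d hd => h d (by simp_all)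
    rw [← List.singleton_append, ← FreeGroup.mul_mk]
    exact ⟨_, add_add_one_mem_crCosts_mul hc hk⟩

theorem conjTerm_append_toWord (p : Wrd n × Wrd n) (c : FreeGroup (Fin n)) :
    conjTerm (p.1, p.2 ++ c.toWord) = MulAut.conj c⁻¹ (conjTerm p) := by
  simp only [conjTerm, ← FreeGroup.mul_mk, FreeGroup.mk_toWord, MulAut.conj_apply, inv_inv]
  group

theorem conjTerm_comp_map_winv : conjTerm ∘ Prod.map winv id = (·⁻¹) ∘ conjTerm (n := n) := by
  funext p
  simp [conjTerm, mk_winv]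

theorem crCosts_conj_subset (c g : FreeGroup (Fin n)) :
    crCosts i g ⊆ crCosts i (c⁻¹ * g * c) := by
  rintro _ ⟨vs, us, hne, hlen, hred, rfl, rfl⟩
  refine ⟨vs, us.map (· ++ c.toWord), hne, by simp [hlen], hred, ?_, rfl⟩
  rw [List.zip_map_right, List.map_map,
    show conjTerm ∘ Prod.map id (· ++ c.toWord) = MulAut.conj c⁻¹ ∘ conjTerm from
      funext fun p => conjTerm_append_toWord p c,
    ← List.map_map, ← map_list_prod, MulAut.conj_apply, inv_inv]

theorem crCosts_conj (c g : FreeGroup (Fin n)) : crCosts i (c⁻¹ * g * c) = crCosts i g :=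
  (crCosts_conj_subset c g).antisymm' <| by
    simpa [mul_assoc] using crCosts_conj_subset c⁻¹ (c⁻¹ * g * c)

theorem crCosts_inv_subset (g : FreeGroup (Fin n)) : crCosts i g ⊆ crCosts i g⁻¹ := by
  rintro _ ⟨vs, us, hne, hlen, hred, rfl, rfl⟩
  refine ⟨(vs.map winv).reverse, us.reverse, by simpa using hne, by simp [hlen], ?_, ?_, ?_⟩
  · simp only [List.mem_reverse, List.mem_map, forall_exists_index, and_imp]
    rintro _ v hv rfl
    exact ⟨reduced_winv (hred v hv).1, avoids_winv (hred v hv).2⟩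
  · rw [← List.map_reverse, List.zip_map_left, List.zip_reverse_reverse hlen.symm,
      List.prod_inv_reverse]
    simp [conjTerm_comp_map_winv]
  · simp [List.map_reverse, Function.comp_def, simpleLen_winv]

theorem crCosts_inv (g : FreeGroup (Fin n)) : crCosts i g⁻¹ = crCosts i g :=
  (crCosts_inv_subset g).antisymm' <| by simpa using crCosts_inv_subset g⁻¹

theorem sInf_crCosts_mul_le {g h : FreeGroup (Fin n)} (hg : (crCosts i g).Nonempty)
    (hh : (crCosts i h).Nonempty) :
    sInf (crCosts i (g * h)) ≤ sInf (crCosts i g) + sInf (crCosts i h) + 1 :=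
  Nat.sInf_le (add_add_one_mem_crCosts_mul (Nat.sInf_mem hg) (Nat.sInf_mem hh))

end CrLen

theorem statement7_general (n : ℕ) (i : Fin n) (u v w : Wrd n)
    (havu : Avoids i u) (havv : Avoids i v) (havw : Avoids i w) :
    (crLen i (u ++ v) : ℤ) - crLen i w - 1 ≤ crLen i (u ++ w ++ v) ∧
      (crLen i (u ++ w ++ v) : ℤ) ≤ crLen i (u ++ v) + crLen i w + 1 := by
  have hW := crCosts_mk_nonempty havw
  have hUV := crCosts_mk_nonempty (havu.append havv)
  have hUWV := crCosts_mk_nonempty ((havu.append havw).append havv)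
  simp only [crLen_eq_sInf_crCosts, ← FreeGroup.mul_mk] at hUV hUWV ⊢
  set U := FreeGroup.mk u
  set V := FreeGroup.mk v
  set W := FreeGroup.mk w
  have upper : sInf (crCosts i (U * W * V)) ≤
      sInf (crCosts i (U * V)) + sInf (crCosts i W) + 1 := by
    have h := sInf_crCosts_mul_le ((crCosts_conj U⁻¹ W).symm ▸ hW) hUV
    rw [crCosts_conj, show U⁻¹⁻¹ * W * U⁻¹ * (U * V) = U * W * V by group] at h
    omega
  have lower : sInf (crCosts i (U * V)) ≤
      sInf (crCosts i (U * W * V)) + sInf (crCosts i W) + 1 := by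
    have hW' : (crCosts i (V⁻¹ * W⁻¹ * V)).Nonempty := by rwa [crCosts_conj, crCosts_inv]
    have h := sInf_crCosts_mul_le hUWV hW'
    rwa [crCosts_conj, crCosts_inv, show U * W * V * (V⁻¹ * W⁻¹ * V) = U * V by group] at h
  omega

/-- conjugate reduced `i`-length under insertion of a middle word. -/
theorem statement7 (n : ℕ) (hn : 2 < n) (i : Fin n) (u v w : Wrd n)
    (hu : Reduced u) (hv : Reduced v) (hw : Reduced w)
    (havu : Avoids i u) (havv : Avoids i v) (havw : Avoids i w) :
    (crLen i (u ++ v) : ℤ) - crLen i w - 1 ≤ crLen i (u ++ w ++ v) ∧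
      (crLen i (u ++ w ++ v) : ℤ) ≤ crLen i (u ++ v) + crLen i w + 1 :=
  statement7_general n i u v w havu havv havw

end ESPaper
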